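/- (Proposition 1, fractional Hilbert transform of a Gabor-like wavelet.) Let ξ₀ > 0, τ ∈ ℝ, and let φ : ℝ → ℂ be integrable with 𝓕φ(ξ) = 0 whenever |ξ| ≥ ξ₀. Then for every ξ ∈ ℝ, 𝓕(x ↦ φ(x)·cos(2π ξ₀ x + π τ))(ξ) = (cos(π τ) + i·sin(π τ)·sign(ξ))·𝓕(x ↦ φ(x)·cos(2π ξ₀ x))(ξ). Equivalently, the fractional Hilbert transform 𝗛_τ = cos(πτ)·I − sin(πτ)·𝗛 applied to the windowed cosine φ(x)cos(2π ξ₀ x) yields φ(x)cos(2π ξ₀ x + π τ): it acts on the phase of the modulating sinusoid while preserving the envelope. -/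

import Mathlib

open MeasureTheory
open scoped FourierTransform Real RealInnerProductSpace

/-!
Writing `cos (2π ξ₀ x + a) = (e^{ia} e^{2πi ξ₀ x} + e^{-ia} e^{-2πi ξ₀ x}) / 2`, the Fourier
transform of `φ x * cos (2π ξ₀ x + a)` at `ξ` is `(e^{ia} 𝓕φ (ξ - ξ₀) + e^{-ia} 𝓕φ (ξ + ξ₀)) / 2`.
The band limit kills the second term for `ξ ≥ 0` and the first for `ξ ≤ 0`, so on each half-line
the phase `a` only contributes the factor `e^{± ia}`; for `a = πτ` this is
`cos (πτ) + i sin (πτ) sign ξ`.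
-/

namespace Real

variable {V E : Type*} [NormedAddCommGroup V] [InnerProductSpace ℝ V] [MeasurableSpace V]
  [BorelSpace V] [FiniteDimensional ℝ V] [NormedAddCommGroup E] [NormedSpace ℂ E]

theorem fourier_fourierChar_smul (f : V → E) (v₀ w : V) :
    𝓕 (fun v ↦ 𝐞 ⟪v, v₀⟫ • f v) w = 𝓕 f (w - v₀) := by
  simp only [fourier_eq, smul_smul, ← AddChar.map_add_eq_mul, inner_sub_right]
  congr with v
  ring_nf

theorem integrable_fourierChar_smul {f : V → E} (hf : Integrable f) (v₀ : V) :
    Integrable (fun v ↦ 𝐞 ⟪v, v₀⟫ • f v) := by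
  simpa [inner_neg_right] using (fourierIntegral_convergent_iff (-v₀)).2 hf

theorem ofReal_cos_two_pi_mul_add (t a : ℝ) :
    (Real.cos (2 * π * t + a) : ℂ) =
      Complex.exp (a * Complex.I) / 2 * 𝐞 t + Complex.exp (-a * Complex.I) / 2 * 𝐞 (-t) := by
  simp only [Complex.ofReal_cos, Complex.cos, fourierChar_apply, div_mul_eq_mul_div,
    ← Complex.exp_add, add_div]
  congr 3 <;> push_cast <;> ring

theorem fourier_cos_smul {f : V → E} (hf : Integrable f) (v₀ w : V) (a : ℝ) :
    𝓕 (fun v ↦ (Real.cos (2 * π * ⟪v, v₀⟫ + a) : ℂ) • f v) w =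
      (Complex.exp (a * Complex.I) / 2) • 𝓕 f (w - v₀)
        + (Complex.exp (-a * Complex.I) / 2) • 𝓕 f (w + v₀) := by
  simp_rw [ofReal_cos_two_pi_mul_add, add_smul, mul_smul, ← Circle.smul_def, ← inner_neg_right]
  rw [fourier_eq]
  simp_rw [smul_add, smul_comm (𝐞 _) (_ : ℂ)]
  rw [integral_add, integral_smul, integral_smul, ← fourier_eq, ← fourier_eq,
    fourier_fourierChar_smul, fourier_fourierChar_smul, sub_neg_eq_add]
  all_goals
    exact ((fourierIntegral_convergent_iff w).2 (integrable_fourierChar_smul hf _)).smul (_ : ℂ)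

theorem fourier_cos_smul_eq_zero {f : V → E} (hf : Integrable f) {v₀ w : V}
    (h_sub : 𝓕 f (w - v₀) = 0) (h_add : 𝓕 f (w + v₀) = 0) (a : ℝ) :
    𝓕 (fun v ↦ (Real.cos (2 * π * ⟪v, v₀⟫ + a) : ℂ) • f v) w = 0 := by
  rw [fourier_cos_smul hf, h_sub, h_add, smul_zero, smul_zero, add_zero]

theorem fourier_cos_add_smul_of_fourier_add_eq_zero {f : V → E} (hf : Integrable f) {v₀ w : V}
    (h_add : 𝓕 f (w + v₀) = 0) (a : ℝ) :
    𝓕 (fun v ↦ (Real.cos (2 * π * ⟪v, v₀⟫ + a) : ℂ) • f v) w =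
      Complex.exp (a * Complex.I) • 𝓕 (fun v ↦ (Real.cos (2 * π * ⟪v, v₀⟫) : ℂ) • f v) w := by
  have h₀ := fourier_cos_smul hf v₀ w 0
  simp only [add_zero, Complex.ofReal_zero, zero_mul, neg_zero, Complex.exp_zero] at h₀
  rw [fourier_cos_smul hf, h₀, h_add, smul_zero, smul_zero, add_zero, add_zero, smul_smul,
    mul_one_div]

theorem fourier_cos_add_smul_of_fourier_sub_eq_zero {f : V → E} (hf : Integrable f) {v₀ w : V}
    (h_sub : 𝓕 f (w - v₀) = 0) (a : ℝ) :
    𝓕 (fun v ↦ (Real.cos (2 * π * ⟪v, v₀⟫ + a) : ℂ) • f v) w =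
      Complex.exp (-a * Complex.I) • 𝓕 (fun v ↦ (Real.cos (2 * π * ⟪v, v₀⟫) : ℂ) • f v) w := by
  have h₀ := fourier_cos_smul hf v₀ w 0
  simp only [add_zero, Complex.ofReal_zero, zero_mul, neg_zero, Complex.exp_zero] at h₀
  rw [fourier_cos_smul hf, h₀, h_sub, smul_zero, smul_zero, zero_add, zero_add, smul_smul,
    mul_one_div]

end Real

theorem fractional_hilbert_of_gabor_wavelet_general
    (ξ₀ : ℝ) (τ : ℝ) (φ : ℝ → ℂ) (hφ : Integrable φ)
    (hband : ∀ ξ : ℝ, ξ₀ ≤ |ξ| → 𝓕 φ ξ = 0) :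
    ∀ ξ : ℝ,
      𝓕 (fun x : ℝ => φ x * (Real.cos (2 * π * ξ₀ * x + π * τ) : ℂ)) ξ =
        ((Real.cos (π * τ) : ℂ) + Complex.I * (Real.sin (π * τ) : ℂ) * (Real.sign ξ : ℂ)) *
          𝓕 (fun x : ℝ => φ x * (Real.cos (2 * π * ξ₀ * x) : ℂ)) ξ := by
  intro ξ
  have h_inner (a : ℝ) : (fun x : ℝ ↦ φ x * (Real.cos (2 * π * ξ₀ * x + a) : ℂ)) =
      fun x ↦ (Real.cos (2 * π * ⟪x, ξ₀⟫ + a) : ℂ) • φ x := by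
    ext x
    simp only [RCLike.inner_apply, conj_trivial, smul_eq_mul]
    ring_nf
  have h_add : 0 ≤ ξ → 𝓕 φ (ξ + ξ₀) = 0 := fun hξ ↦ hband _ (le_abs.2 (.inl (by linarith)))
  have h_sub : ξ ≤ 0 → 𝓕 φ (ξ - ξ₀) = 0 := fun hξ ↦ hband _ (le_abs.2 (.inr (by linarith)))
  have h_inner₀ := h_inner 0
  simp only [add_zero] at h_inner₀
  rw [h_inner, h_inner₀]
  rcases lt_trichotomy ξ 0 with hξ | rfl | hξ
  · rw [Real.fourier_cos_add_smul_of_fourier_sub_eq_zero hφ (h_sub hξ.le), Real.sign_of_neg hξ,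
      smul_eq_mul, ← Complex.ofReal_neg, Complex.exp_mul_I, ← Complex.ofReal_cos,
      ← Complex.ofReal_sin, Real.cos_neg, Real.sin_neg]
    push_cast
    ring
  · have h_zero := Real.fourier_cos_smul_eq_zero hφ (h_sub le_rfl) (h_add le_rfl)
    have h_zero₀ := h_zero 0
    simp only [add_zero] at h_zero₀
    rw [h_zero, h_zero₀, mul_zero]
  · rw [Real.fourier_cos_add_smul_of_fourier_add_eq_zero hφ (h_add hξ.le), Real.sign_of_pos hξ,
      smul_eq_mul, Complex.exp_mul_I, ← Complex.ofReal_cos, ← Complex.ofReal_sin]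
    push_cast
    ring

/-- Proposition 1: the fractional Hilbert transform `𝗛_τ` applied to the bandlimited
windowed cosine `φ(x) cos(2π ξ₀ x)` yields `φ(x) cos(2π ξ₀ x + π τ)`; on the Fourier side,
the phase-shifted wavelet corresponds to multiplication by `cos(πτ) + i sin(πτ) sign(ξ)`. -/
theorem fractional_hilbert_of_gabor_wavelet
    (ξ₀ : ℝ) (hξ₀ : 0 < ξ₀) (τ : ℝ) (φ : ℝ → ℂ) (hφ : Integrable φ)
    (hband : ∀ ξ : ℝ, ξ₀ ≤ |ξ| → 𝓕 φ ξ = 0) :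
    ∀ ξ : ℝ,
      𝓕 (fun x : ℝ => φ x * (Real.cos (2 * π * ξ₀ * x + π * τ) : ℂ)) ξ =
        ((Real.cos (π * τ) : ℂ) + Complex.I * (Real.sin (π * τ) : ℂ) * (Real.sign ξ : ℂ)) *
          𝓕 (fun x : ℝ => φ x * (Real.cos (2 * π * ξ₀ * x) : ℂ)) ξ :=
  fractional_hilbert_of_gabor_wavelet_general ξ₀ τ φ hφ hband
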